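/- Nonlocal Korn inequality: let n ≥ 2, Ω ⊂ ℝⁿ open bounded, and A ∈ L^2(Ω×Ω) a symmetric positive definite kernel whose weak partial derivatives are in L¹_loc(Ω×Ω) and satisfy ∂_{x_k}A(x,x') = γ ∂_{x'_k}A(x,x') a.e. for some γ with γ² = 1. Then for all u ∈ C_c^∞(Ω;ℝⁿ): 2 ∫_Ω∫_Ω A(x,x') ε_u(x):ε_u(x') dx'dx ≥ ∫_Ω∫_Ω A(x,x') ∇u(x):∇u(x') dx'dx, where ε_u = (∇u + ∇uᵀ)/2. -/

import Mathlib

open MeasureTheory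

noncomputable section

/-- The Jacobian matrix of a vector field on ℝⁿ. -/
def jac {n : ℕ} (u : EuclideanSpace ℝ (Fin n) → EuclideanSpace ℝ (Fin n))
    (x : EuclideanSpace ℝ (Fin n)) : Matrix (Fin n) (Fin n) ℝ :=
  fun k m => fderiv ℝ u x (EuclideanSpace.single m 1) k

/-- The symmetrized gradient (linearized strain) of a vector field. -/
def symGrad {n : ℕ} (u : EuclideanSpace ℝ (Fin n) → EuclideanSpace ℝ (Fin n))
    (x : EuclideanSpace ℝ (Fin n)) : Matrix (Fin n) (Fin n) ℝ :=
  fun k m => (jac u x k m + jac u x m k) / 2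

/-- The Frobenius inner product of two matrices. -/
def frob {n : ℕ} (A B : Matrix (Fin n) (Fin n) ℝ) : ℝ := ∑ k, ∑ m, A k m * B k m

/-- Smooth compactly supported vector field with support inside Ω. -/
def IsTestVF {n : ℕ} (Ω : Set (EuclideanSpace ℝ (Fin n)))
    (u : EuclideanSpace ℝ (Fin n) → EuclideanSpace ℝ (Fin n)) : Prop :=
  ContDiff ℝ (⊤ : ℕ∞) u ∧ HasCompactSupport u ∧ tsupport u ⊆ Ω

/-- Smooth compactly supported scalar test function on the product domain Ω×Ω. -/
def IsTestProd {n : ℕ} (Ω : Set (EuclideanSpace ℝ (Fin n)))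
    (φ : EuclideanSpace ℝ (Fin n) × EuclideanSpace ℝ (Fin n) → ℝ) : Prop :=
  ContDiff ℝ (⊤ : ℕ∞) φ ∧ HasCompactSupport φ ∧ tsupport φ ⊆ Ω ×ˢ Ω

/- ### Auxiliary lemmas -/

section Aux

variable {n : ℕ} {Ω : Set (EuclideanSpace ℝ (Fin n))}

lemma isTestProd_mul {f g : EuclideanSpace ℝ (Fin n) → ℝ}
    (hf : ContDiff ℝ (⊤ : ℕ∞) f) (hfc : HasCompactSupport f) (hfs : tsupport f ⊆ Ω)
    (hg : ContDiff ℝ (⊤ : ℕ∞) g) (hgc : HasCompactSupport g) (hgs : tsupport g ⊆ Ω) :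
    IsTestProd Ω (fun p : EuclideanSpace ℝ (Fin n) × EuclideanSpace ℝ (Fin n) =>
      f p.1 * g p.2) := by
  have hsupp : tsupport (fun p : EuclideanSpace ℝ (Fin n) × EuclideanSpace ℝ (Fin n) =>
      f p.1 * g p.2) ⊆ tsupport f ×ˢ tsupport g := by
    apply closure_minimal ?_ (isClosed_closure.prod isClosed_closure)
    intro p hp
    have h1 : f p.1 ≠ 0 := fun h => hp (by simp [Function.mem_support, h])
    have h2 : g p.2 ≠ 0 := fun h => hp (by simp [Function.mem_support, h])
    exact ⟨subset_closure h1, subset_closure h2⟩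
  refine ⟨(hf.comp contDiff_fst).mul (hg.comp contDiff_snd), ?_,
    hsupp.trans (Set.prod_mono hfs hgs)⟩
  exact IsCompact.of_isClosed_subset (hfc.prod hgc) isClosed_closure hsupp

lemma fderiv_mul_prodfun {f g : EuclideanSpace ℝ (Fin n) → ℝ}
    (hf : ContDiff ℝ (⊤ : ℕ∞) f) (hg : ContDiff ℝ (⊤ : ℕ∞) g)
    (p : EuclideanSpace ℝ (Fin n) × EuclideanSpace ℝ (Fin n))
    (v w : EuclideanSpace ℝ (Fin n)) :
    fderiv ℝ (fun q : EuclideanSpace ℝ (Fin n) × EuclideanSpace ℝ (Fin n) =>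
        f q.1 * g q.2) p (v, w)
      = fderiv ℝ f p.1 v * g p.2 + f p.1 * fderiv ℝ g p.2 w := by
  have h1 : HasFDerivAt (fun q : EuclideanSpace ℝ (Fin n) × EuclideanSpace ℝ (Fin n) => f q.1)
      ((fderiv ℝ f p.1).comp (ContinuousLinearMap.fst ℝ _ _)) p :=
    (hf.differentiable (by simp) p.1).hasFDerivAt.comp p hasFDerivAt_fst
  have h2 : HasFDerivAt (fun q : EuclideanSpace ℝ (Fin n) × EuclideanSpace ℝ (Fin n) => g q.2)
      ((fderiv ℝ g p.2).comp (ContinuousLinearMap.snd ℝ _ _)) p :=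
    (hg.differentiable (by simp) p.2).hasFDerivAt.comp p hasFDerivAt_snd
  rw [HasFDerivAt.fderiv (f := fun q : EuclideanSpace ℝ (Fin n) × EuclideanSpace ℝ (Fin n) =>
    f q.1 * g q.2) (h1.mul h2)]
  simp
  ring

/-- component of a vector field -/
def fc {n : ℕ} (u : EuclideanSpace ℝ (Fin n) → EuclideanSpace ℝ (Fin n)) (k : Fin n)
    (x : EuclideanSpace ℝ (Fin n)) : ℝ := u x k

/-- entries of the Jacobian -/
def gc {n : ℕ} (u : EuclideanSpace ℝ (Fin n) → EuclideanSpace ℝ (Fin n)) (k m : Fin n)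
    (x : EuclideanSpace ℝ (Fin n)) : ℝ := fderiv ℝ u x (EuclideanSpace.single m 1) k

lemma gc_eq_jac (u : EuclideanSpace ℝ (Fin n) → EuclideanSpace ℝ (Fin n)) (k m : Fin n)
    (x : EuclideanSpace ℝ (Fin n)) : gc u k m x = jac u x k m := rfl

variable {u : EuclideanSpace ℝ (Fin n) → EuclideanSpace ℝ (Fin n)}
  (hu : ContDiff ℝ (⊤ : ℕ∞) u) (huc : HasCompactSupport u) (hus : tsupport u ⊆ Ω)

/-- the evaluation clm -/
def Lkm (k m : Fin n) :
    (EuclideanSpace ℝ (Fin n) →L[ℝ] EuclideanSpace ℝ (Fin n)) →L[ℝ] ℝ :=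
  (EuclideanSpace.proj k).comp
    (ContinuousLinearMap.apply ℝ (EuclideanSpace ℝ (Fin n)) (EuclideanSpace.single m 1))

lemma gc_eq_L (k m : Fin n) :
    gc u k m = fun x => Lkm k m (fderiv ℝ u x) := rfl

include hu in
lemma fc_smooth (k : Fin n) : ContDiff ℝ (⊤ : ℕ∞) (fc u k) :=
  (EuclideanSpace.proj (𝕜 := ℝ) k).contDiff.comp hu

include huc in
lemma fc_cs (k : Fin n) : HasCompactSupport (fc u k) :=
  huc.comp_left (g := fun v : EuclideanSpace ℝ (Fin n) => v k) rfl

include hus in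
lemma fc_supp (k : Fin n) : tsupport (fc u k) ⊆ Ω := by
  have h : Function.support (fc u k) ⊆ tsupport u := fun x hx =>
    subset_closure (fun h0 => hx (by simp [fc, h0]))
  exact (closure_minimal h (isClosed_tsupport u)).trans hus

include hu in
lemma gc_smooth (k m : Fin n) : ContDiff ℝ (⊤ : ℕ∞) (gc u k m) :=
  (Lkm k m).contDiff.comp (hu.fderiv_right (by simp))

include huc in
lemma gc_cs (k m : Fin n) : HasCompactSupport (gc u k m) :=
  (huc.fderiv (𝕜 := ℝ)).comp_left (g := fun T => Lkm k m T) (map_zero _)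

lemma gc_supp_u (k m : Fin n) : Function.support (gc u k m) ⊆ tsupport u := by
  intro x hx
  have h0 : fderiv ℝ u x ≠ 0 := by
    intro h
    exact hx (by simp [gc_eq_L, h, map_zero])
  exact support_fderiv_subset ℝ h0

include hus in
lemma gc_supp (k m : Fin n) : tsupport (gc u k m) ⊆ Ω :=
  (closure_minimal (gc_supp_u (u := u) k m) (isClosed_tsupport u)).trans hus

include hu in
lemma fderiv_fc (k m : Fin n) (x : EuclideanSpace ℝ (Fin n)) :
    fderiv ℝ (fc u k) x (EuclideanSpace.single m 1) = gc u k m x := by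
  have h : HasFDerivAt (fc u k) ((EuclideanSpace.proj k).comp (fderiv ℝ u x)) x :=
    (EuclideanSpace.proj (𝕜 := ℝ) k).hasFDerivAt.comp x
      (hu.differentiable (by simp) x).hasFDerivAt
  rw [h.fderiv]; rfl

include hu in
lemma fderiv_gc_symm (k m j : Fin n) (x : EuclideanSpace ℝ (Fin n)) :
    fderiv ℝ (gc u m k) x (EuclideanSpace.single j 1)
      = fderiv ℝ (gc u m j) x (EuclideanSpace.single k 1) := by
  have hd : Differentiable ℝ (fderiv ℝ u) := (hu.fderiv_right (m := 1) (WithTop.coe_le_coe.mpr le_top)).differentiable one_ne_zero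
  have h1 : ∀ a b : Fin n, fderiv ℝ (gc u m a) x (EuclideanSpace.single b 1)
      = fderiv ℝ (fderiv ℝ u) x (EuclideanSpace.single b 1) (EuclideanSpace.single a 1) m := by
    intro a b
    have h : HasFDerivAt (gc u m a) ((Lkm m a).comp (fderiv ℝ (fderiv ℝ u) x)) x :=
      (Lkm m a).hasFDerivAt.comp x (hd x).hasFDerivAt
    rw [h.fderiv]; rfl
  rw [h1, h1]
  exact congrArg (fun v : EuclideanSpace ℝ (Fin n) => v m)
    (hu.contDiffAt.isSymmSndFDerivAt (by rw [minSmoothness_of_isRCLikeNormedField]; exact WithTop.coe_le_coe.mpr le_top) _ _)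

lemma two_frob_sym (B C : Matrix (Fin n) (Fin n) ℝ) :
    2 * (∑ k, ∑ m, ((B k m + B m k)/2) * ((C k m + C m k)/2))
      = (∑ k, ∑ m, B k m * C k m) + ∑ k, ∑ m, B k m * C m k := by
  have h1 : ∑ k, ∑ m, B m k * C m k = ∑ k, ∑ m, B k m * C k m := Finset.sum_comm
  have h2 : ∑ k, ∑ m, B m k * C k m = ∑ k, ∑ m, B k m * C m k := Finset.sum_comm
  have expand : ∀ a b c d : ℝ, 2 * ((a + b)/2 * ((c + d)/2))
      = a*c/2 + a*d/2 + (b*c/2 + b*d/2) := by intros; ring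
  calc 2 * (∑ k, ∑ m, ((B k m + B m k)/2) * ((C k m + C m k)/2))
      = ∑ k, ∑ m, 2 * (((B k m + B m k)/2) * ((C k m + C m k)/2)) := by
        rw [Finset.mul_sum]; simp only [Finset.mul_sum]
    _ = ∑ k, ∑ m, (B k m * C k m/2 + B k m * C m k/2
          + (B m k * C k m/2 + B m k * C m k/2)) := by simp only [expand]
    _ = (∑ k, ∑ m, B k m * C k m)/2 + (∑ k, ∑ m, B k m * C m k)/2
          + ((∑ k, ∑ m, B m k * C k m)/2 + (∑ k, ∑ m, B m k * C m k)/2) := by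
        simp only [Finset.sum_add_distrib, ← Finset.sum_div]
    _ = _ := by rw [h1, h2]; ring

end Aux

/-- Nonlocal Korn's inequality. -/
theorem nonlocal_korn_inequality
    {n : ℕ} (hn : 2 ≤ n) (Ω : Set (EuclideanSpace ℝ (Fin n)))
    (hΩo : IsOpen Ω) (hΩb : Bornology.IsBounded Ω)
    (A : EuclideanSpace ℝ (Fin n) → EuclideanSpace ℝ (Fin n) → ℝ)
    (hA2 : MemLp (fun p : EuclideanSpace ℝ (Fin n) × EuclideanSpace ℝ (Fin n) => A p.1 p.2) 2
      ((volume.restrict Ω).prod (volume.restrict Ω)))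
    (hAsym : ∀ x y, A x y = A y x)
    -- positive definiteness of the kernel
    (hpd : ∀ φ : EuclideanSpace ℝ (Fin n) → ℝ, ContDiff ℝ (⊤ : ℕ∞) φ → HasCompactSupport φ →
      tsupport φ ⊆ Ω → 0 ≤ ∫ x in Ω, ∫ y in Ω, A x y * φ x * φ y)
    -- weak partial derivatives of A w.r.t. the first and second group of variables
    (D D' : Fin n → EuclideanSpace ℝ (Fin n) → EuclideanSpace ℝ (Fin n) → ℝ)
    (hDloc : ∀ k, LocallyIntegrableOn
      (fun p : EuclideanSpace ℝ (Fin n) × EuclideanSpace ℝ (Fin n) => D k p.1 p.2) (Ω ×ˢ Ω))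
    (hD'loc : ∀ k, LocallyIntegrableOn
      (fun p : EuclideanSpace ℝ (Fin n) × EuclideanSpace ℝ (Fin n) => D' k p.1 p.2) (Ω ×ˢ Ω))
    (hD : ∀ k, ∀ φ, IsTestProd Ω φ →
      ∫ p in Ω ×ˢ Ω, A p.1 p.2 *
          fderiv ℝ φ p (EuclideanSpace.single k 1, (0 : EuclideanSpace ℝ (Fin n)))
        = - ∫ p in Ω ×ˢ Ω, D k p.1 p.2 * φ p)
    (hD' : ∀ k, ∀ φ, IsTestProd Ω φ →
      ∫ p in Ω ×ˢ Ω, A p.1 p.2 *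
          fderiv ℝ φ p ((0 : EuclideanSpace ℝ (Fin n)), EuclideanSpace.single k 1)
        = - ∫ p in Ω ×ˢ Ω, D' k p.1 p.2 * φ p)
    (γ : ℝ) (hγ : γ ^ 2 = 1)
    (hrel : ∀ k, ∀ᵐ p ∂((volume.restrict Ω).prod (volume.restrict Ω)),
      D k p.1 p.2 = γ * D' k p.1 p.2)
    (u : EuclideanSpace ℝ (Fin n) → EuclideanSpace ℝ (Fin n)) (hu : IsTestVF Ω u) :
    ∫ x in Ω, ∫ y in Ω, A x y * frob (jac u x) (jac u y)
      ≤ 2 * ∫ x in Ω, ∫ y in Ω, A x y * frob (symGrad u x) (symGrad u y) := by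
  classical
  obtain ⟨hu_sm, hu_cs, hu_sp⟩ := hu
  haveI hfin : IsFiniteMeasure (volume.restrict Ω : Measure (EuclideanSpace ℝ (Fin n))) :=
    ⟨by rw [Measure.restrict_apply_univ]; exact hΩb.measure_lt_top⟩
  have hπ : (volume : Measure (EuclideanSpace ℝ (Fin n) ×
        EuclideanSpace ℝ (Fin n))).restrict (Ω ×ˢ Ω)
      = (volume.restrict Ω).prod (volume.restrict Ω) := by
    rw [Measure.volume_eq_prod, Measure.prod_restrict]
  -- integrability facts
  have hAint : Integrable (fun p : EuclideanSpace ℝ (Fin n) × EuclideanSpace ℝ (Fin n) =>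
      A p.1 p.2) ((volume.restrict Ω).prod (volume.restrict Ω)) := hA2.integrable one_le_two
  have hterm : ∀ c : EuclideanSpace ℝ (Fin n) × EuclideanSpace ℝ (Fin n) → ℝ,
      Continuous c → HasCompactSupport c →
      Integrable (fun p => A p.1 p.2 * c p)
        ((volume.restrict Ω).prod (volume.restrict Ω)) := fun c hc hcc =>
    (hAint.bdd_mul hc.aestronglyMeasurable
      (Filter.Eventually.of_forall (hc.bounded_above_of_compact_support hcc).choose_spec)).congr
      (Filter.Eventually.of_forall fun p => mul_comm _ _)
  have hpair : ∀ a b : EuclideanSpace ℝ (Fin n) → ℝ, ContDiff ℝ (⊤ : ℕ∞) a → HasCompactSupport a →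
      ContDiff ℝ (⊤ : ℕ∞) b → HasCompactSupport b →
      Integrable (fun p : EuclideanSpace ℝ (Fin n) × EuclideanSpace ℝ (Fin n) =>
        A p.1 p.2 * (a p.1 * b p.2)) ((volume.restrict Ω).prod (volume.restrict Ω)) := by
    intro a b ha hac hb hbc
    refine hterm _ (((ha.continuous).comp continuous_fst).mul
      ((hb.continuous).comp continuous_snd)) ?_
    exact (isTestProd_mul (Ω := Set.univ) ha hac (Set.subset_univ _)
      hb hbc (Set.subset_univ _)).2.1
  -- weak derivative relation, integral form
  have hrelInt : ∀ (k : Fin n) (h : EuclideanSpace ℝ (Fin n) × EuclideanSpace ℝ (Fin n) → ℝ),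
      ∫ p, D k p.1 p.2 * h p ∂((volume.restrict Ω).prod (volume.restrict Ω))
        = γ * ∫ p, D' k p.1 p.2 * h p ∂((volume.restrict Ω).prod (volume.restrict Ω)) := by
    intro k h
    rw [← integral_const_mul]
    refine integral_congr_ae ((hrel k).mono fun p hp => ?_)
    show D k p.1 p.2 * h p = γ * (D' k p.1 p.2 * h p)
    rw [hp]; ring
  -- key integration-by-parts swap
  have hswap : ∀ (a b : EuclideanSpace ℝ (Fin n) → ℝ),
      ContDiff ℝ (⊤ : ℕ∞) a → HasCompactSupport a → tsupport a ⊆ Ω →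
      ContDiff ℝ (⊤ : ℕ∞) b → HasCompactSupport b → tsupport b ⊆ Ω → ∀ k : Fin n,
      ∫ p, A p.1 p.2 * (fderiv ℝ a p.1 (EuclideanSpace.single k 1) * b p.2)
          ∂((volume.restrict Ω).prod (volume.restrict Ω))
        = γ * ∫ p, A p.1 p.2 * (a p.1 * fderiv ℝ b p.2 (EuclideanSpace.single k 1))
          ∂((volume.restrict Ω).prod (volume.restrict Ω)) := by
    intro a b ha hac has hb hbc hbs k
    have hφ : IsTestProd Ω (fun p : EuclideanSpace ℝ (Fin n) × EuclideanSpace ℝ (Fin n) =>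
        a p.1 * b p.2) := isTestProd_mul ha hac has hb hbc hbs
    have e1 := hD k _ hφ
    have e2 := hD' k _ hφ
    rw [hπ] at e1 e2
    have ed : ∀ p : EuclideanSpace ℝ (Fin n) × EuclideanSpace ℝ (Fin n),
        A p.1 p.2 * (fderiv ℝ a p.1 (EuclideanSpace.single k 1) * b p.2)
        = A p.1 p.2 * fderiv ℝ (fun q : EuclideanSpace ℝ (Fin n) × EuclideanSpace ℝ (Fin n) =>
            a q.1 * b q.2) p (EuclideanSpace.single k 1, 0) := fun p => by
      rw [fderiv_mul_prodfun ha hb]; simp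
    have ed' : ∀ p : EuclideanSpace ℝ (Fin n) × EuclideanSpace ℝ (Fin n),
        A p.1 p.2 * fderiv ℝ (fun q : EuclideanSpace ℝ (Fin n) × EuclideanSpace ℝ (Fin n) =>
            a q.1 * b q.2) p (0, EuclideanSpace.single k 1)
        = A p.1 p.2 * (a p.1 * fderiv ℝ b p.2 (EuclideanSpace.single k 1)) := fun p => by
      rw [fderiv_mul_prodfun ha hb]; simp
    calc ∫ p, A p.1 p.2 * (fderiv ℝ a p.1 (EuclideanSpace.single k 1) * b p.2)
            ∂((volume.restrict Ω).prod (volume.restrict Ω))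
        = ∫ p, A p.1 p.2 * fderiv ℝ
            (fun q : EuclideanSpace ℝ (Fin n) × EuclideanSpace ℝ (Fin n) => a q.1 * b q.2) p
            (EuclideanSpace.single k 1, 0) ∂((volume.restrict Ω).prod (volume.restrict Ω)) :=
          integral_congr_ae (Filter.Eventually.of_forall ed)
      _ = - ∫ p, D k p.1 p.2 * (a p.1 * b p.2)
            ∂((volume.restrict Ω).prod (volume.restrict Ω)) := e1
      _ = - (γ * ∫ p, D' k p.1 p.2 * (a p.1 * b p.2)
            ∂((volume.restrict Ω).prod (volume.restrict Ω))) := by rw [hrelInt]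
      _ = γ * (- ∫ p, D' k p.1 p.2 * (a p.1 * b p.2)
            ∂((volume.restrict Ω).prod (volume.restrict Ω))) := by ring
      _ = γ * ∫ p, A p.1 p.2 * fderiv ℝ
            (fun q : EuclideanSpace ℝ (Fin n) × EuclideanSpace ℝ (Fin n) => a q.1 * b q.2) p
            (0, EuclideanSpace.single k 1) ∂((volume.restrict Ω).prod (volume.restrict Ω)) := by
          rw [e2]
      _ = γ * ∫ p, A p.1 p.2 * (a p.1 * fderiv ℝ b p.2 (EuclideanSpace.single k 1))
            ∂((volume.restrict Ω).prod (volume.restrict Ω)) := by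
          rw [integral_congr_ae (Filter.Eventually.of_forall ed')]
  -- per-entry identity: cross term equals divergence term
  have hkm : ∀ k m : Fin n,
      ∫ p, A p.1 p.2 * (gc u k m p.1 * gc u m k p.2)
          ∂((volume.restrict Ω).prod (volume.restrict Ω))
        = ∫ p, A p.1 p.2 * (gc u k k p.1 * gc u m m p.2)
          ∂((volume.restrict Ω).prod (volume.restrict Ω)) := by
    intro k m
    have h1 := hswap (fc u k) (gc u m k) (fc_smooth hu_sm k) (fc_cs hu_cs k) (fc_supp hu_sp k)
      (gc_smooth hu_sm m k) (gc_cs hu_cs m k) (gc_supp hu_sp m k) m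
    have h2 := hswap (fc u k) (gc u m m) (fc_smooth hu_sm k) (fc_cs hu_cs k) (fc_supp hu_sp k)
      (gc_smooth hu_sm m m) (gc_cs hu_cs m m) (gc_supp hu_sp m m) k
    simp only [fderiv_fc hu_sm] at h1 h2
    simp only [show ∀ x, fderiv ℝ (gc u m k) x (EuclideanSpace.single m 1)
        = fderiv ℝ (gc u m m) x (EuclideanSpace.single k 1) from
      fun x => fderiv_gc_symm hu_sm k m m x] at h1
    exact h1.trans h2.symm
  -- the divergence
  set dv : EuclideanSpace ℝ (Fin n) → ℝ := fun x => ∑ k, gc u k k x with hdv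
  have hdv_sm : ContDiff ℝ (⊤ : ℕ∞) dv := by
    rw [hdv]; exact ContDiff.sum fun k _ => gc_smooth hu_sm k k
  have hdv_suppu : Function.support dv ⊆ tsupport u := by
    intro x hx
    have hex : ∃ k, gc u k k x ≠ 0 := by
      by_contra h
      push_neg at h
      exact hx (by simp [hdv, h])
    obtain ⟨k, hk⟩ := hex
    exact gc_supp_u k k hk
  have hdv_cs : HasCompactSupport dv :=
    IsCompact.of_isClosed_subset hu_cs isClosed_closure
      (closure_minimal hdv_suppu (isClosed_tsupport u))
  have hdv_sp : tsupport dv ⊆ Ω :=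
    (closure_minimal hdv_suppu (isClosed_tsupport u)).trans hu_sp
  -- positivity of the cross term
  have hcross : 0 ≤ ∫ p, A p.1 p.2 * (∑ k, ∑ m, gc u k m p.1 * gc u m k p.2)
      ∂((volume.restrict Ω).prod (volume.restrict Ω)) := by
    have hsplit1 : ∫ p, A p.1 p.2 * (∑ k, ∑ m, gc u k m p.1 * gc u m k p.2)
          ∂((volume.restrict Ω).prod (volume.restrict Ω))
        = ∑ k, ∑ m, ∫ p, A p.1 p.2 * (gc u k m p.1 * gc u m k p.2)
          ∂((volume.restrict Ω).prod (volume.restrict Ω)) := by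
      calc ∫ p, A p.1 p.2 * (∑ k, ∑ m, gc u k m p.1 * gc u m k p.2)
            ∂((volume.restrict Ω).prod (volume.restrict Ω))
          = ∫ p, ∑ k, ∑ m, A p.1 p.2 * (gc u k m p.1 * gc u m k p.2)
            ∂((volume.restrict Ω).prod (volume.restrict Ω)) :=
            integral_congr_ae (Filter.Eventually.of_forall fun p => by simp [Finset.mul_sum])
        _ = ∑ k, ∑ m, ∫ p, A p.1 p.2 * (gc u k m p.1 * gc u m k p.2)
            ∂((volume.restrict Ω).prod (volume.restrict Ω)) := by
            rw [integral_finset_sum _ fun k _ => integrable_finset_sum _ fun m _ =>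
              hpair _ _ (gc_smooth hu_sm k m) (gc_cs hu_cs k m)
                (gc_smooth hu_sm m k) (gc_cs hu_cs m k)]
            exact Finset.sum_congr rfl fun k _ => integral_finset_sum _ fun m _ =>
              hpair _ _ (gc_smooth hu_sm k m) (gc_cs hu_cs k m)
                (gc_smooth hu_sm m k) (gc_cs hu_cs m k)
    have hsplit2 : ∑ k, ∑ m, ∫ p, A p.1 p.2 * (gc u k k p.1 * gc u m m p.2)
          ∂((volume.restrict Ω).prod (volume.restrict Ω))
        = ∫ p, A p.1 p.2 * (dv p.1 * dv p.2)
          ∂((volume.restrict Ω).prod (volume.restrict Ω)) := by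
      calc ∑ k, ∑ m, ∫ p, A p.1 p.2 * (gc u k k p.1 * gc u m m p.2)
            ∂((volume.restrict Ω).prod (volume.restrict Ω))
          = ∫ p, ∑ k, ∑ m, A p.1 p.2 * (gc u k k p.1 * gc u m m p.2)
            ∂((volume.restrict Ω).prod (volume.restrict Ω)) := by
            rw [integral_finset_sum _ fun k _ => integrable_finset_sum _ fun m _ =>
              hpair _ _ (gc_smooth hu_sm k k) (gc_cs hu_cs k k)
                (gc_smooth hu_sm m m) (gc_cs hu_cs m m)]
            exact (Finset.sum_congr rfl fun k _ => (integral_finset_sum _ fun m _ =>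
              hpair _ _ (gc_smooth hu_sm k k) (gc_cs hu_cs k k)
                (gc_smooth hu_sm m m) (gc_cs hu_cs m m)).symm)
        _ = ∫ p, A p.1 p.2 * (dv p.1 * dv p.2)
            ∂((volume.restrict Ω).prod (volume.restrict Ω)) := by
            refine integral_congr_ae (Filter.Eventually.of_forall fun p => ?_)
            simp only [hdv]
            rw [Finset.sum_mul_sum]
            simp [Finset.mul_sum]
    have hfub : ∫ p, A p.1 p.2 * (dv p.1 * dv p.2)
          ∂((volume.restrict Ω).prod (volume.restrict Ω))
        = ∫ x in Ω, ∫ y in Ω, A x y * dv x * dv y := by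
      calc ∫ p, A p.1 p.2 * (dv p.1 * dv p.2)
            ∂((volume.restrict Ω).prod (volume.restrict Ω))
          = ∫ x in Ω, ∫ y in Ω, A x y * (dv x * dv y) :=
            integral_prod _ (hpair dv dv hdv_sm hdv_cs hdv_sm hdv_cs)
        _ = ∫ x in Ω, ∫ y in Ω, A x y * dv x * dv y := by simp only [← mul_assoc]
    rw [hsplit1]
    calc (0:ℝ) ≤ ∫ x in Ω, ∫ y in Ω, A x y * dv x * dv y := hpd dv hdv_sm hdv_cs hdv_sp
      _ = ∫ p, A p.1 p.2 * (dv p.1 * dv p.2)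
            ∂((volume.restrict Ω).prod (volume.restrict Ω)) := hfub.symm
      _ = ∑ k, ∑ m, ∫ p, A p.1 p.2 * (gc u k k p.1 * gc u m m p.2)
            ∂((volume.restrict Ω).prod (volume.restrict Ω)) := hsplit2.symm
      _ = ∑ k, ∑ m, ∫ p, A p.1 p.2 * (gc u k m p.1 * gc u m k p.2)
            ∂((volume.restrict Ω).prod (volume.restrict Ω)) :=
          Finset.sum_congr rfl fun k _ => Finset.sum_congr rfl fun m _ => (hkm k m).symm
  -- pointwise expansion of the symmetrized Frobenius product
  have key : ∀ x y, 2 * frob (symGrad u x) (symGrad u y)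
      = frob (jac u x) (jac u y) + ∑ k, ∑ m, gc u k m x * gc u m k y := by
    intro x y
    have h := two_frob_sym (jac u x) (jac u y)
    simpa [frob, symGrad, gc_eq_jac] using h
  -- integrability of the three integrands
  have hFL : Integrable (fun p : EuclideanSpace ℝ (Fin n) × EuclideanSpace ℝ (Fin n) =>
      A p.1 p.2 * frob (jac u p.1) (jac u p.2))
      ((volume.restrict Ω).prod (volume.restrict Ω)) := by
    refine (integrable_finset_sum (μ := (volume.restrict Ω).prod (volume.restrict Ω))
      Finset.univ (f := fun k p => ∑ m, A p.1 p.2 * (gc u k m p.1 * gc u k m p.2))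
      fun k _ => integrable_finset_sum _ fun m _ =>
        hpair _ _ (gc_smooth hu_sm k m) (gc_cs hu_cs k m)
          (gc_smooth hu_sm k m) (gc_cs hu_cs k m)).congr
      (Filter.Eventually.of_forall fun p => ?_)
    simp [frob, ← gc_eq_jac, Finset.mul_sum]
  have hFC : Integrable (fun p : EuclideanSpace ℝ (Fin n) × EuclideanSpace ℝ (Fin n) =>
      A p.1 p.2 * (∑ k, ∑ m, gc u k m p.1 * gc u m k p.2))
      ((volume.restrict Ω).prod (volume.restrict Ω)) := by
    refine (integrable_finset_sum (μ := (volume.restrict Ω).prod (volume.restrict Ω))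
      Finset.univ (f := fun k p => ∑ m, A p.1 p.2 * (gc u k m p.1 * gc u m k p.2))
      fun k _ => integrable_finset_sum _ fun m _ =>
        hpair _ _ (gc_smooth hu_sm k m) (gc_cs hu_cs k m)
          (gc_smooth hu_sm m k) (gc_cs hu_cs m k)).congr
      (Filter.Eventually.of_forall fun p => ?_)
    simp [Finset.mul_sum]
  have hFR : Integrable (fun p : EuclideanSpace ℝ (Fin n) × EuclideanSpace ℝ (Fin n) =>
      A p.1 p.2 * frob (symGrad u p.1) (symGrad u p.2))
      ((volume.restrict Ω).prod (volume.restrict Ω)) := by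
    refine ((hFL.add hFC).div_const 2).congr (Filter.Eventually.of_forall fun p => ?_)
    have h := key p.1 p.2
    simp only [Pi.add_apply]
    linear_combination (-1/2 : ℝ) * A p.1 p.2 * h
  -- convert the goal to product integrals
  have convL : ∫ x in Ω, ∫ y in Ω, A x y * frob (jac u x) (jac u y)
      = ∫ p, A p.1 p.2 * frob (jac u p.1) (jac u p.2)
        ∂((volume.restrict Ω).prod (volume.restrict Ω)) := (integral_prod _ hFL).symm
  have convR : ∫ x in Ω, ∫ y in Ω, A x y * frob (symGrad u x) (symGrad u y)
      = ∫ p, A p.1 p.2 * frob (symGrad u p.1) (symGrad u p.2)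
        ∂((volume.restrict Ω).prod (volume.restrict Ω)) := (integral_prod _ hFR).symm
  rw [convL, convR]
  have hsum : 2 * ∫ p, A p.1 p.2 * frob (symGrad u p.1) (symGrad u p.2)
        ∂((volume.restrict Ω).prod (volume.restrict Ω))
      = (∫ p, A p.1 p.2 * frob (jac u p.1) (jac u p.2)
          ∂((volume.restrict Ω).prod (volume.restrict Ω)))
        + ∫ p, A p.1 p.2 * (∑ k, ∑ m, gc u k m p.1 * gc u m k p.2)
          ∂((volume.restrict Ω).prod (volume.restrict Ω)) := by
    rw [← integral_add hFL hFC, ← integral_const_mul]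
    refine integral_congr_ae (Filter.Eventually.of_forall fun p => ?_)
    have h := key p.1 p.2
    linear_combination A p.1 p.2 * h
  rw [hsum]
  linarith [hcross]
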